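/- Let u, v be orthonormal vectors in the plane, let S be a finite set of n points, and let K be a point such that each of the four closed half-planes { x | ⟪u, x − K⟫ ≥ 0 }, { x | ⟪u, x − K⟫ ≤ 0 }, { x | ⟪v, x − K⟫ ≥ 0 }, { x | ⟪v, x − K⟫ ≤ 0 } contains at least ⌈n/2⌉ points of S. Let F be a natural number with F < ⌈n/2⌉ and let N ⊆ S satisfy |S \ N| ≤ F. Then for every p ∈ N there exists q ∈ N with dist(p, K) ≤ √2 · dist(p, q). -/

import Mathlib

/-!
Project `p - K` on the orthonormal directions `u, v`. In each direction both closed half-planes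
through `K` contain more points of `S` than the at most `F` points of `S \ N`, so both contain a
point of `N`; taking `q ∈ N` on the side of `K` opposite to `p` gives
`|⟪w, p - K⟫| ≤ dist p q`.
For the direction in which the projection is larger, Parseval's identity gives
`dist p K ≤ √2 · |⟪w, p - K⟫| ≤ √2 · dist p q`.
-/

open RealInnerProductSpace

lemma Finset.exists_mem_of_card_sdiff_lt {α : Type*} [DecidableEq α] {S T N : Finset α}
    (hTS : T ⊆ S) (h : (S \ N).card < T.card) : ∃ x ∈ T, x ∈ N := by
  by_contra! hTN
  have : T ⊆ S \ N := fun x hx => Finset.mem_sdiff.mpr ⟨hTS hx, hTN x hx⟩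
  exact (Finset.card_le_card this).not_gt h

section HalfSpaces

variable {E : Type*} [NormedAddCommGroup E] [InnerProductSpace ℝ E]

lemma abs_inner_sub_sub_inner_sub_le_dist {w : E} (hw : ‖w‖ ≤ 1) (p q K : E) :
    |⟪w, p - K⟫ - ⟪w, q - K⟫| ≤ dist p q :=
  calc |⟪w, p - K⟫ - ⟪w, q - K⟫| = |⟪w, p - q⟫| := by
        rw [← inner_sub_right, sub_sub_sub_cancel_right]
    _ ≤ ‖w‖ * ‖p - q‖ := abs_real_inner_le_norm w (p - q)
    _ ≤ dist p q := by
        rw [dist_eq_norm]; exact mul_le_of_le_one_left (norm_nonneg _) hw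

lemma exists_mem_abs_inner_sub_le_dist [DecidableEq E] {w : E} (hw : ‖w‖ ≤ 1)
    {S N : Finset E} {K : E}
    (hge : (S \ N).card < (S.filter fun x => 0 ≤ ⟪w, x - K⟫).card)
    (hle : (S \ N).card < (S.filter fun x => ⟪w, x - K⟫ ≤ 0).card) (p : E) :
    ∃ q ∈ N, |⟪w, p - K⟫| ≤ dist p q := by
  rcases le_total 0 ⟪w, p - K⟫ with hp | hp
  · obtain ⟨q, hq, hqN⟩ := Finset.exists_mem_of_card_sdiff_lt (Finset.filter_subset _ _) hle
    have hqK : ⟪w, q - K⟫ ≤ 0 := (Finset.mem_filter.mp hq).2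
    refine ⟨q, hqN, le_trans ?_ (abs_inner_sub_sub_inner_sub_le_dist hw p q K)⟩
    rw [abs_of_nonneg hp]
    exact (by linarith : ⟪w, p - K⟫ ≤ ⟪w, p - K⟫ - ⟪w, q - K⟫).trans (le_abs_self _)
  · obtain ⟨q, hq, hqN⟩ := Finset.exists_mem_of_card_sdiff_lt (Finset.filter_subset _ _) hge
    have hqK : 0 ≤ ⟪w, q - K⟫ := (Finset.mem_filter.mp hq).2
    refine ⟨q, hqN, le_trans ?_ (abs_inner_sub_sub_inner_sub_le_dist hw p q K)⟩
    rw [abs_of_nonpos hp]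
    exact (by linarith : -⟪w, p - K⟫ ≤ -(⟪w, p - K⟫ - ⟪w, q - K⟫)).trans
      (neg_le_abs _)

lemma exists_mem_dist_le_sqrt_card_mul_dist [DecidableEq E] {ι : Type*} [Fintype ι]
    [Nonempty ι] (b : OrthonormalBasis ι ℝ E) {S N : Finset E} {K : E}
    (hge : ∀ i, (S \ N).card < (S.filter fun x => 0 ≤ ⟪b i, x - K⟫).card)
    (hle : ∀ i, (S \ N).card < (S.filter fun x => ⟪b i, x - K⟫ ≤ 0).card) (p : E) :
    ∃ q ∈ N, dist p K ≤ √(Fintype.card ι) * dist p q := by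
  obtain ⟨i, hi⟩ := Finite.exists_max fun j => ‖⟪b j, p - K⟫‖
  obtain ⟨q, hqN, hq⟩ :=
    exists_mem_abs_inner_sub_le_dist (b.orthonormal.norm_eq_one i).le (hge i) (hle i) p
  refine ⟨q, hqN, ?_⟩
  calc dist p K = ‖p - K‖ := dist_eq_norm p K
    _ ≤ √(Fintype.card ι) * ⨆ j, ‖⟪b j, p - K⟫‖ :=
        b.norm_le_card_mul_iSup_norm_inner (p - K)
    _ ≤ √(Fintype.card ι) * dist p q := by
        gcongr
        exact ciSup_le fun j => (hi j).trans hq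

end HalfSpaces

theorem intersection_point_gathering_bound_general
    (u v : EuclideanSpace ℝ (Fin 2)) (hu : ‖u‖ = 1) (hv : ‖v‖ = 1)
    (huv : ⟪u, v⟫ = 0)
    (S : Finset (EuclideanSpace ℝ (Fin 2))) (K : EuclideanSpace ℝ (Fin 2))
    (h1 : ⌈(S.card : ℚ) / 2⌉₊ ≤ (S.filter fun x => 0 ≤ ⟪u, x - K⟫).card)
    (h2 : ⌈(S.card : ℚ) / 2⌉₊ ≤ (S.filter fun x => ⟪u, x - K⟫ ≤ 0).card)
    (h3 : ⌈(S.card : ℚ) / 2⌉₊ ≤ (S.filter fun x => 0 ≤ ⟪v, x - K⟫).card)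
    (h4 : ⌈(S.card : ℚ) / 2⌉₊ ≤ (S.filter fun x => ⟪v, x - K⟫ ≤ 0).card)
    (F : ℕ) (hF : F < ⌈(S.card : ℚ) / 2⌉₊)
    (N : Finset (EuclideanSpace ℝ (Fin 2)))
    (hNF : (S \ N).card ≤ F) :
    ∀ p ∈ N, ∃ q ∈ N, dist p K ≤ Real.sqrt 2 * dist p q := by
  have horth : Orthonormal ℝ ![u, v] := by
    rw [orthonormal_vecCons_iff]
    refine ⟨hu, fun i => ?_, ?_⟩
    · fin_cases i; exact huv
    · rw [orthonormal_vecCons_iff]; exact ⟨hv, fun i => i.elim0, Orthonormal.of_isEmpty _⟩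
  obtain ⟨b, hb⟩ :
      ∃ b : OrthonormalBasis (Fin 2) ℝ (EuclideanSpace ℝ (Fin 2)), ⇑b = ![u, v] :=
    ⟨(basisOfOrthonormalOfCardEqFinrank horth (by simp)).toOrthonormalBasis
      (by rwa [coe_basisOfOrthonormalOfCardEqFinrank]),
      by simp only [Module.Basis.coe_toOrthonormalBasis, coe_basisOfOrthonormalOfCardEqFinrank]⟩
  have hge : ∀ i, (S \ N).card < (S.filter fun x => 0 ≤ ⟪b i, x - K⟫).card := by
    simp only [hb, Fin.forall_fin_two]
    exact ⟨hNF.trans_lt (hF.trans_le h1), hNF.trans_lt (hF.trans_le h3)⟩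
  have hle : ∀ i, (S \ N).card < (S.filter fun x => ⟪b i, x - K⟫ ≤ 0).card := by
    simp only [hb, Fin.forall_fin_two]
    exact ⟨hNF.trans_lt (hF.trans_le h2), hNF.trans_lt (hF.trans_le h4)⟩
  intro p _
  simpa only [Fintype.card_fin, Nat.cast_ofNat] using
    exists_mem_dist_le_sqrt_card_mul_dist b hge hle p

/-- If `u, v` are orthonormal directions and each of the four closed half-planes
through `K` with normals `±u, ±v` contains at least `⌈n/2⌉` points of `S`,
`F < ⌈n/2⌉`, and `N ⊆ S` omits at most `F` points of `S`, then every `p ∈ N`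
has some `q ∈ N` with `dist(p, K) ≤ √2 · dist(p, q)`. -/
theorem intersection_point_gathering_bound
    (u v : EuclideanSpace ℝ (Fin 2)) (hu : ‖u‖ = 1) (hv : ‖v‖ = 1)
    (huv : ⟪u, v⟫ = 0)
    (S : Finset (EuclideanSpace ℝ (Fin 2))) (K : EuclideanSpace ℝ (Fin 2))
    (h1 : ⌈(S.card : ℚ) / 2⌉₊ ≤ (S.filter fun x => 0 ≤ ⟪u, x - K⟫).card)
    (h2 : ⌈(S.card : ℚ) / 2⌉₊ ≤ (S.filter fun x => ⟪u, x - K⟫ ≤ 0).card)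
    (h3 : ⌈(S.card : ℚ) / 2⌉₊ ≤ (S.filter fun x => 0 ≤ ⟪v, x - K⟫).card)
    (h4 : ⌈(S.card : ℚ) / 2⌉₊ ≤ (S.filter fun x => ⟪v, x - K⟫ ≤ 0).card)
    (F : ℕ) (hF : F < ⌈(S.card : ℚ) / 2⌉₊)
    (N : Finset (EuclideanSpace ℝ (Fin 2))) (hNS : N ⊆ S)
    (hNF : (S \ N).card ≤ F) :
    ∀ p ∈ N, ∃ q ∈ N, dist p K ≤ Real.sqrt 2 * dist p q :=
  intersection_point_gathering_bound_general u v hu hv huv S K h1 h2 h3 h4 F hF N hNF
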